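/- Let X_1, …, X_n be independent nonnegative random variables, let OPT = E[max_{S : |S| ≤ k} ∑_{i∈S} X_i], and set the static threshold T = OPT/(2k). The online algorithm that accepts item i iff X_i > T and fewer than k items have been accepted achieves expected value at least OPT/2. -/

import Mathlib

/-- One step of the static-threshold online algorithm for a `k`-uniform constraint. -/
noncomputable def algStep (T : ℝ) (k : ℕ) (s : ℕ × ℝ) (x : ℝ) : ℕ × ℝ :=
  if T < x ∧ s.1 < k then (s.1 + 1, s.2 + x) else s

/-- Total value accepted by the static-threshold algorithm on the value sequence `xs`. -/
noncomputable def algValue (T : ℝ) (k : ℕ) (xs : List ℝ) : ℝ :=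
  (xs.foldl (algStep T k) (0, 0)).2

/-- The prophet's benchmark: max over subsets of size at most `k` of the total value. -/
noncomputable def prophetValue {n : ℕ} (k : ℕ) (x : Fin n → ℝ) : ℝ :=
  (((Finset.univ : Finset (Fin n)).powerset.filter fun S => S.card ≤ k).sup'
    ⟨∅, by simp⟩ fun S => ∑ i ∈ S, x i)

/-!
Let `N` be the number of items above `T` and `p = P[N < k]`. The algorithm earns `T` for each
of its `min N k` acceptances, plus the surplus `(X_i - T)⁺` of every item `i` such that fewer
than `k` other items exceed `T`, because such an item is always accepted. That event is
independent of `X_i` and contains `{N < k}`, so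
`E[ALG] ≥ k T (1 - p) + p ∑ᵢ E[(X_i - T)⁺] ≥ k T (1 - p) + p (OPT - k T)`,
the last step by `max_{|S| ≤ k} ∑_{i ∈ S} X_i ≤ ∑ᵢ (X_i - T)⁺ + k T`.
For `k T = OPT / 2` the right-hand side is `OPT / 2`.
-/

open Finset Function

section PiExpect

variable {ι α : Type*} [Fintype ι] [DecidableEq ι]

lemma prod_update_mul (ν : ι → α → ℝ) (ω : ι → α) (i : ι) (a : α) :
    (∏ j, ν j (update ω i a j)) * ν i (ω i) = (∏ j, ν j (ω j)) * ν i a := by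
  rw [Fintype.prod_eq_mul_prod_compl i, Fintype.prod_eq_mul_prod_compl i (fun j => ν j (ω j)),
    update_self, prod_congr rfl fun j hj => by rw [update_of_ne (by simpa using hj)]]
  ring

variable [Fintype α]

noncomputable def piExpect (ν : ι → α → ℝ) (f : (ι → α) → ℝ) : ℝ :=
  ∑ ω, (∏ i, ν i (ω i)) * f ω

variable {ν : ι → α → ℝ}

lemma piExpect_mono (hν : ∀ i a, 0 ≤ ν i a) {f g : (ι → α) → ℝ} (hfg : ∀ ω, f ω ≤ g ω) :
    piExpect ν f ≤ piExpect ν g :=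
  sum_le_sum fun ω _ => mul_le_mul_of_nonneg_left (hfg ω) (prod_nonneg fun i _ => hν i (ω i))

lemma piExpect_nonneg (hν : ∀ i a, 0 ≤ ν i a) {f : (ι → α) → ℝ} (hf : ∀ ω, 0 ≤ f ω) :
    0 ≤ piExpect ν f :=
  sum_nonneg fun ω _ => mul_nonneg (prod_nonneg fun i _ => hν i (ω i)) (hf ω)

lemma piExpect_add (f g : (ι → α) → ℝ) :
    piExpect ν (fun ω => f ω + g ω) = piExpect ν f + piExpect ν g := by
  simp only [piExpect, mul_add, sum_add_distrib]

lemma piExpect_sub (f g : (ι → α) → ℝ) :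
    piExpect ν (fun ω => f ω - g ω) = piExpect ν f - piExpect ν g := by
  simp only [piExpect, mul_sub, sum_sub_distrib]

lemma piExpect_const_mul (c : ℝ) (f : (ι → α) → ℝ) :
    piExpect ν (fun ω => c * f ω) = c * piExpect ν f := by
  simp only [piExpect, mul_sum, mul_left_comm]

lemma piExpect_sum {κ : Type*} (s : Finset κ) (f : κ → (ι → α) → ℝ) :
    piExpect ν (fun ω => ∑ j ∈ s, f j ω) = ∑ j ∈ s, piExpect ν (f j) := by
  simp only [piExpect, mul_sum]
  exact sum_comm

lemma piExpect_const (hν : ∀ i, ∑ a, ν i a = 1) (c : ℝ) :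
    piExpect ν (fun _ => c) = c := by
  rw [piExpect, ← sum_mul, ← Fintype.prod_sum]
  simp [hν]

/-- Resampling coordinate `i` by the involution `(ω, a) ↦ (update ω i a, ω i)` preserves the
weight `(∏ j, ν j (ω j)) * ν i a`, while it moves `f (ω i)` to `f a` and leaves `g` unchanged. -/
lemma piExpect_mul_of_update_eq {i : ι} (hν : ∑ a, ν i a = 1) (f : α → ℝ)
    {g : (ι → α) → ℝ} (hg : ∀ ω a, g (update ω i a) = g ω) :
    piExpect ν (fun ω => f (ω i) * g ω) = (∑ a, ν i a * f a) * piExpect ν g := by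
  let e : Equiv.Perm ((ι → α) × α) :=
    Involutive.toPerm (fun p => (update p.1 i p.2, p.1 i)) fun p => by simp
  calc piExpect ν (fun ω => f (ω i) * g ω)
      = ∑ p : (ι → α) × α, (∏ j, ν j (p.1 j)) * ν i p.2 * (f (p.1 i) * g p.1) := by
        rw [Fintype.sum_prod_type]
        simp only [piExpect, ← sum_mul, ← mul_sum, hν, mul_one]
    _ = ∑ p : (ι → α) × α, (∏ j, ν j (p.1 j)) * ν i p.2 * (f p.2 * g p.1) := by
        rw [← Equiv.sum_comp e]
        refine sum_congr rfl fun p _ => ?_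
        simp only [e, Involutive.toPerm, Equiv.coe_fn_mk, update_self, prod_update_mul, hg]
    _ = (∑ a, ν i a * f a) * piExpect ν g := by
        simp only [piExpect, Fintype.sum_prod_type, sum_mul, mul_sum]
        exact sum_congr rfl fun ω _ => sum_congr rfl fun a _ => by ring

lemma piExpect_comp_eval (hν : ∀ i, ∑ a, ν i a = 1) (i : ι) (f : α → ℝ) :
    piExpect ν (fun ω => f (ω i)) = ∑ a, ν i a * f a := by
  simpa [piExpect_const hν] using
    piExpect_mul_of_update_eq (hν i) f (g := fun _ => 1) fun _ _ => rfl

end PiExpect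

section Threshold

variable {ι : Type*} [Fintype ι] (T : ℝ)

noncomputable def numAbove (x : ι → ℝ) : ℕ := #{i | T < x i}

noncomputable def numAboveExcept [DecidableEq ι] (x : ι → ℝ) (i : ι) : ℕ :=
  #{j | j ≠ i ∧ T < x j}

variable [DecidableEq ι]

lemma numAboveExcept_le (x : ι → ℝ) (i : ι) : numAboveExcept T x i ≤ numAbove T x :=
  card_le_card fun j hj => by
    simp only [mem_filter] at hj ⊢
    exact ⟨hj.1, hj.2.2⟩

lemma numAbove_eq_numAboveExcept_add_one {x : ι → ℝ} {i : ι} (hi : T < x i) :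
    numAbove T x = numAboveExcept T x i + 1 := by
  rw [numAbove, numAboveExcept, ← card_insert_of_notMem (a := i) (by simp)]
  congr 1
  ext j
  by_cases hj : j = i <;> simp [hj, hi]

lemma numAboveExcept_congr {x y : ι → ℝ} {i : ι} (h : ∀ j ≠ i, x j = y j) :
    numAboveExcept T x i = numAboveExcept T y i := by
  unfold numAboveExcept
  congr 1
  exact filter_congr fun j _ => and_congr_right fun hj => by rw [h j hj]

end Threshold

section Algorithm

variable (T : ℝ) (k : ℕ)

lemma le_foldl_algStep (xs : List ℝ) (c : ℕ) (v : ℝ) :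
    v + T * min (xs.countP (fun x => T < x)) (k - c) ≤ (xs.foldl (algStep T k) (c, v)).2 := by
  induction xs generalizing c v with
  | nil => simp
  | cons x xs ih =>
    rw [List.foldl_cons, List.countP_cons]
    by_cases hx : T < x
    · by_cases hc : c < k
      · have hmin : min (xs.countP (fun x => T < x) + 1) (k - c)
            = min (xs.countP (fun x => T < x)) (k - (c + 1)) + 1 := by omega
        rw [show algStep T k (c, v) x = (c + 1, v + x) by simp [algStep, hx, hc]]
        refine le_trans ?_ (ih (c + 1) (v + x))
        simp only [hx, decide_true, if_true, hmin, Nat.cast_add, Nat.cast_one]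
        linarith
      · simpa [algStep, hc, Nat.sub_eq_zero_of_le (not_lt.mp hc)] using ih c v
    · simpa [algStep, hx] using ih c v

lemma foldl_algStep_eq (xs : List ℝ) (c : ℕ) (v : ℝ) (h : xs.countP (fun x => T < x) ≤ k - c) :
    (xs.foldl (algStep T k) (c, v)).2
      = v + T * xs.countP (fun x => T < x) + (xs.map fun x => (x - T)⁺).sum := by
  induction xs generalizing c v with
  | nil => simp
  | cons x xs ih =>
    rw [List.foldl_cons, List.countP_cons] at *
    by_cases hx : T < x
    · simp only [hx, decide_true, if_true] at h ⊢
      rw [show algStep T k (c, v) x = (c + 1, v + x) by simp [algStep, hx]; omega,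
        ih (c + 1) (v + x) (by omega), List.map_cons, List.sum_cons,
        posPart_eq_self.mpr (sub_nonneg.mpr hx.le)]
      push_cast
      ring
    · simp only [hx, decide_false] at h ⊢
      rw [show algStep T k (c, v) x = (c, v) by simp [algStep, hx], ih c v (by simpa using h),
        List.map_cons, List.sum_cons, posPart_eq_zero.mpr (by linarith)]
      simp

lemma countP_ofFn_eq_numAbove {n : ℕ} (x : Fin n → ℝ) :
    (List.ofFn x).countP (fun y => T < y) = numAbove T x := by
  rw [← Multiset.coe_countP, ← Fin.univ_val_map, Multiset.countP_map]
  rfl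

lemma mul_min_add_sum_le_algValue {n : ℕ} (x : Fin n → ℝ) :
    T * min (numAbove T x) k + ∑ i, (if numAboveExcept T x i < k then (x i - T)⁺ else 0)
      ≤ algValue T k (List.ofFn x) := by
  have hsum : ((List.ofFn x).map fun y => (y - T)⁺).sum = ∑ i, (x i - T)⁺ := by
    rw [List.map_ofFn, List.sum_ofFn]
    rfl
  rcases le_or_gt (numAbove T x) k with hle | hgt
  · rw [algValue, foldl_algStep_eq T k _ 0 0 (by rwa [countP_ofFn_eq_numAbove]),
      countP_ofFn_eq_numAbove, hsum, min_eq_left hle, zero_add]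
    gcongr with i
    split_ifs <;> simp [posPart_nonneg]
  · have hzero : ∀ i, (if numAboveExcept T x i < k then (x i - T)⁺ else 0) = 0 := by
      intro i
      by_cases hi : T < x i
      · have := numAbove_eq_numAboveExcept_add_one T hi
        rw [if_neg (by omega)]
      · simp [posPart_eq_zero.mpr (sub_nonpos.mpr (not_lt.mp hi))]
    have := le_foldl_algStep T k (List.ofFn x) 0 0
    rw [countP_ofFn_eq_numAbove, Nat.sub_zero, zero_add] at this
    simpa [algValue, hzero] using this

end Algorithm

lemma prophetValue_nonneg {n : ℕ} (k : ℕ) (x : Fin n → ℝ) : 0 ≤ prophetValue k x :=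
  le_sup'_of_le _ (by simp : ∅ ∈ _) (by simp)

lemma prophetValue_le_sum_posPart_add {n : ℕ} {T : ℝ} (hT : 0 ≤ T) (k : ℕ) (x : Fin n → ℝ) :
    prophetValue k x ≤ ∑ i, (x i - T)⁺ + k * T := by
  refine sup'_le _ _ fun S hS => ?_
  have hcard : (S.card : ℝ) ≤ k := by exact_mod_cast (mem_filter.mp hS).2
  calc ∑ i ∈ S, x i ≤ ∑ i ∈ S, ((x i - T)⁺ + T) :=
        sum_le_sum fun i _ => by linarith [le_posPart (x i - T)]
    _ = ∑ i ∈ S, (x i - T)⁺ + S.card * T := by rw [sum_add_distrib, sum_const, nsmul_eq_mul]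
    _ ≤ ∑ i, (x i - T)⁺ + k * T := by
        gcongr
        exact subset_univ S

section Expectation

variable {ι α : Type*} [Fintype ι] [DecidableEq ι] [Fintype α] {ν : ι → α → ℝ}

lemma mul_one_sub_le_piExpect_min (hν0 : ∀ i a, 0 ≤ ν i a) (hν1 : ∀ i, ∑ a, ν i a = 1)
    (N : (ι → α) → ℕ) (k : ℕ) :
    k * (1 - piExpect ν fun ω => if N ω < k then 1 else 0)
      ≤ piExpect ν fun ω => ((min (N ω) k : ℕ) : ℝ) := by
  have hlin : (piExpect ν fun ω => k - k * if N ω < k then (1 : ℝ) else 0)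
      = k * (1 - piExpect ν fun ω => if N ω < k then 1 else 0) := by
    rw [piExpect_sub, piExpect_const hν1, piExpect_const_mul]
    ring
  rw [← hlin]
  refine piExpect_mono hν0 fun ω => ?_
  split_ifs with h
  · simp
  · simp [min_eq_right (not_lt.mp h)]

variable (T : ℝ) (vals : ι → α → ℝ) (k : ℕ)

lemma mul_piExpect_posPart_le (hν0 : ∀ i a, 0 ≤ ν i a) (hν1 : ∀ i, ∑ a, ν i a = 1) (i : ι) :
    (piExpect ν fun ω => if numAbove T (fun j => vals j (ω j)) < k then 1 else 0)
        * ∑ a, ν i a * (vals i a - T)⁺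
      ≤ piExpect ν fun ω =>
          if numAboveExcept T (fun j => vals j (ω j)) i < k then (vals i (ω i) - T)⁺ else 0 := by
  simp_rw [← mul_boole _ ((vals i _ - T)⁺)]
  rw [piExpect_mul_of_update_eq (hν1 i) (fun a => (vals i a - T)⁺), mul_comm]
  · refine mul_le_mul_of_nonneg_left (piExpect_mono hν0 fun ω => ?_)
      (sum_nonneg fun a _ => mul_nonneg (hν0 i a) (posPart_nonneg _))
    have := numAboveExcept_le T (fun j => vals j (ω j)) i
    split_ifs <;> first | rfl | omega | norm_num
  · intro ω a
    rw [numAboveExcept_congr T fun j hj => by rw [update_of_ne hj]]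

end Expectation

section KUniform

variable {α : Type*} [Fintype α] {n : ℕ} {ν : Fin n → α → ℝ}

lemma piExpect_prophetValue_sub_le (hν0 : ∀ i a, 0 ≤ ν i a) (hν1 : ∀ i, ∑ a, ν i a = 1)
    {T : ℝ} (hT : 0 ≤ T) (vals : Fin n → α → ℝ) (k : ℕ) :
    (piExpect ν fun ω => prophetValue k fun i => vals i (ω i)) - k * T
      ≤ ∑ i, ∑ a, ν i a * (vals i a - T)⁺ := by
  rw [sub_le_iff_le_add]
  calc (piExpect ν fun ω => prophetValue k fun i => vals i (ω i))
      ≤ piExpect ν fun ω => ∑ i, (vals i (ω i) - T)⁺ + k * T :=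
        piExpect_mono hν0 fun ω => prophetValue_le_sum_posPart_add hT k _
    _ = ∑ i, ∑ a, ν i a * (vals i a - T)⁺ + k * T := by
        rw [piExpect_add, piExpect_sum, piExpect_const hν1]
        congr 1
        exact sum_congr rfl fun i _ => piExpect_comp_eval hν1 i fun a => (vals i a - T)⁺

lemma le_piExpect_algValue (hν0 : ∀ i a, 0 ≤ ν i a) (hν1 : ∀ i, ∑ a, ν i a = 1)
    {T : ℝ} (hT : 0 ≤ T) (vals : Fin n → α → ℝ) (k : ℕ) {p : ℝ}
    (hp : p = piExpect ν fun ω => if numAbove T (fun i => vals i (ω i)) < k then 1 else 0) :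
    k * T * (1 - p) + p * ((piExpect ν fun ω => prophetValue k fun i => vals i (ω i)) - k * T)
      ≤ piExpect ν fun ω => algValue T k (List.ofFn fun i => vals i (ω i)) := by
  have hp0 : 0 ≤ p := hp ▸ piExpect_nonneg hν0 fun ω => by split_ifs <;> norm_num
  calc k * T * (1 - p) + p * ((piExpect ν fun ω => prophetValue k fun i => vals i (ω i)) - k * T)
      ≤ T * (piExpect ν fun ω => ((min (numAbove T fun i => vals i (ω i)) k : ℕ) : ℝ))
          + ∑ i, p * ∑ a, ν i a * (vals i a - T)⁺ := by
        refine add_le_add ?_ ?_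
        · rw [mul_comm (k : ℝ) T, mul_assoc, hp]
          exact mul_le_mul_of_nonneg_left (mul_one_sub_le_piExpect_min hν0 hν1 _ k) hT
        · rw [← mul_sum]
          exact mul_le_mul_of_nonneg_left (piExpect_prophetValue_sub_le hν0 hν1 hT vals k) hp0
    _ ≤ T * (piExpect ν fun ω => ((min (numAbove T fun i => vals i (ω i)) k : ℕ) : ℝ))
          + ∑ i, piExpect ν fun ω => if numAboveExcept T (fun j => vals j (ω j)) i < k
              then (vals i (ω i) - T)⁺ else 0 := by
        gcongr with i
        exact hp ▸ mul_piExpect_posPart_le T vals k hν0 hν1 i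
    _ = piExpect ν fun ω => T * ((min (numAbove T fun i => vals i (ω i)) k : ℕ) : ℝ)
          + ∑ i, if numAboveExcept T (fun j => vals j (ω j)) i < k
              then (vals i (ω i) - T)⁺ else 0 := by
        rw [piExpect_add, piExpect_const_mul, piExpect_sum]
    _ ≤ piExpect ν fun ω => algValue T k (List.ofFn fun i => vals i (ω i)) :=
        piExpect_mono hν0 fun ω => mul_min_add_sum_le_algValue T k _

end KUniform

theorem stmt_11_general {n m : ℕ} (k : ℕ) (hk : 0 < k)
    (vals : Fin n → Fin m → ℝ)
    (ν : Fin n → Fin m → ℝ) (hν0 : ∀ i a, 0 ≤ ν i a) (hν1 : ∀ i, ∑ a, ν i a = 1)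
    (OPT : ℝ)
    (hOPT : OPT = ∑ ω : Fin n → Fin m,
        (∏ i, ν i (ω i)) * prophetValue k (fun i => vals i (ω i))) :
    OPT / 2 ≤ ∑ ω : Fin n → Fin m, (∏ i, ν i (ω i)) *
        algValue (OPT / (2 * k)) k (List.ofFn fun i => vals i (ω i)) := by
  have hE : (piExpect ν fun ω => prophetValue k fun i => vals i (ω i)) = OPT := hOPT.symm
  have hT : 0 ≤ OPT / (2 * k) := by
    have : 0 ≤ OPT := hE ▸ piExpect_nonneg hν0 fun ω => prophetValue_nonneg k _
    positivity
  have hkT : (k : ℝ) * (OPT / (2 * k)) = OPT / 2 := by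
    field_simp
  have key := le_piExpect_algValue hν0 hν1 hT vals k rfl
  rw [hE, hkT] at key
  refine Eq.trans_le ?_ key
  ring

/-- "Threshold as constant fraction of the prophet" for the `k`-uniform matroid:
with independent nonnegative `X_i` (finitely supported, product measure encoding) and
`OPT = E[max_{|S| ≤ k} ∑_{i∈S} X_i]`, the static threshold `T = OPT/(2k)` guarantees the
online algorithm expected value at least `OPT/2`. -/
theorem stmt_11 {n m : ℕ} (k : ℕ) (hk : 0 < k)
    (vals : Fin n → Fin m → ℝ) (hvals : ∀ i a, 0 ≤ vals i a)
    (ν : Fin n → Fin m → ℝ) (hν0 : ∀ i a, 0 ≤ ν i a) (hν1 : ∀ i, ∑ a, ν i a = 1)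
    (OPT : ℝ)
    (hOPT : OPT = ∑ ω : Fin n → Fin m,
        (∏ i, ν i (ω i)) * prophetValue k (fun i => vals i (ω i))) :
    OPT / 2 ≤ ∑ ω : Fin n → Fin m, (∏ i, ν i (ω i)) *
        algValue (OPT / (2 * k)) k (List.ofFn fun i => vals i (ω i)) :=
  stmt_11_general k hk vals ν hν0 hν1 OPT hOPT
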